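/- arXiv:2304.05185 — 2 statements merged into one kernel-verified Lean document; each statement's English description precedes it below -/
import Mathlib

section
/- Let (X,d) be a compact metric space, r > 0, x, y ∈ X with d(x,y) < r, and 0 < ν < r − d(x,y). Define A = { r' ∈ [0, r] : (x,y) ν-descends to some pair (x', y') with d(x', y') ≤ r' }. Then A is a nonempty interval of the form [ρ, r] for some ρ ≥ 0 (in particular, A is closed at its left endpoint: the infimum of A belongs to A). -/
/-- The pair `(x, y)` ν-descends to `(x', y')`: there are equal-length finite ν-chains
from `x` to `x'` and from `y` to `y'` whose corresponding points are always at distance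
at most `dist x y`. -/
def Descends {X : Type*} [MetricSpace X] (ν : ℝ) (x y x' y' : X) : Prop :=
  ∃ (p : ℕ) (f g : Fin (p + 1) → X),
    f 0 = x ∧ g 0 = y ∧ f (Fin.last p) = x' ∧ g (Fin.last p) = y' ∧
    (∀ i : Fin p, dist (f i.castSucc) (f i.succ) < ν) ∧
    (∀ i : Fin p, dist (g i.castSucc) (g i.succ) < ν) ∧
    (∀ i : Fin (p + 1), dist (f i) (g i) ≤ dist x y)

/-- `m` is a local minimum value of the distance function of `X`: it is attained at a
pair `(a, b)` and `d ≥ m` on a neighborhood of `(a, b)` in `X × X`. -/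
def IsLocMinVal (X : Type*) [MetricSpace X] (m : ℝ) : Prop :=
  ∃ a b : X, dist a b = m ∧
    ∃ ε > 0, ∀ a' b' : X, dist a a' < ε → dist b b' < ε → m ≤ dist a' b'

lemma descends_refl {X : Type*} [MetricSpace X] (ν : ℝ) (x y : X) :
    Descends ν x y x y :=
  ⟨0, fun _ => x, fun _ => y, rfl, rfl, rfl, rfl, fun i => i.elim0, fun i => i.elim0,
    fun _ => le_refl _⟩

lemma snoc_chain {X : Type*} [MetricSpace X] {p : ℕ} {f : Fin (p+1) → X} {c : X} {ν : ℝ}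
    (hfs : ∀ i : Fin p, dist (f i.castSucc) (f i.succ) < ν)
    (hl : dist (f (Fin.last p)) c < ν) :
    ∀ i : Fin (p + 1), dist ((Fin.snoc f c : Fin (p+2) → X) i.castSucc)
      ((Fin.snoc f c : Fin (p+2) → X) i.succ) < ν := by
  intro i
  refine Fin.lastCases ?_ ?_ i
  · rw [Fin.snoc_castSucc, Fin.succ_last, Fin.snoc_last]; exact hl
  · intro j
    rw [Fin.snoc_castSucc, Fin.succ_castSucc, Fin.snoc_castSucc]
    exact hfs j

lemma descends_extend {X : Type*} [MetricSpace X] {ν : ℝ} {x y x' y' x'' y'' : X}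
    (h : Descends ν x y x' y') (h1 : dist x' x'' < ν) (h2 : dist y' y'' < ν)
    (h3 : dist x'' y'' ≤ dist x y) : Descends ν x y x'' y'' := by
  obtain ⟨p, f, g, hf0, hg0, hfl, hgl, hfs, hgs, hd⟩ := h
  refine ⟨p + 1, Fin.snoc f x'', Fin.snoc g y'', ?_, ?_, by simp, by simp,
    snoc_chain hfs (hfl ▸ h1), snoc_chain hgs (hgl ▸ h2), ?_⟩
  · have h0 : ((0 : Fin (p+2))) = (0 : Fin (p+1)).castSucc := rfl
    rw [h0, Fin.snoc_castSucc]; exact hf0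
  · have h0 : ((0 : Fin (p+2))) = (0 : Fin (p+1)).castSucc := rfl
    rw [h0, Fin.snoc_castSucc]; exact hg0
  · intro i
    refine Fin.lastCases ?_ ?_ i
    · rw [Fin.snoc_last, Fin.snoc_last]; exact h3
    · intro j
      rw [Fin.snoc_castSucc, Fin.snoc_castSucc]
      exact hd j

/-- the set `A` of thresholds `r' ∈ [0, r]` below which `(x,y)` ν-descends
is a nonempty closed-at-the-left interval `[ρ, r]`. -/
theorem stmt_6 {X : Type*} [MetricSpace X] [CompactSpace X] (r : ℝ) (hr : 0 < r)
    (x y : X) (hxy : dist x y < r) (ν : ℝ) (hν0 : 0 < ν) (hν : ν < r - dist x y) :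
    ∃ ρ : ℝ, 0 ≤ ρ ∧
      {r' : ℝ | r' ∈ Set.Icc 0 r ∧ ∃ x' y' : X, Descends ν x y x' y' ∧ dist x' y' ≤ r'} =
        Set.Icc ρ r := by
  set A := {r' : ℝ | r' ∈ Set.Icc 0 r ∧ ∃ x' y' : X, Descends ν x y x' y' ∧ dist x' y' ≤ r'}
    with hA
  have hdA : dist x y ∈ A := ⟨⟨dist_nonneg, hxy.le⟩, x, y, descends_refl ν x y, le_refl _⟩
  have hne : A.Nonempty := ⟨_, hdA⟩
  have hbdd : BddBelow A := ⟨0, fun a ha => ha.1.1⟩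
  set ρ := sInf A with hρ
  have hρ0 : 0 ≤ ρ := le_csInf hne fun a ha => ha.1.1
  have hρd : ρ ≤ dist x y := csInf_le hbdd hdA
  -- choose approximating pairs
  have hchoice : ∀ n : ℕ, ∃ z : X × X, Descends ν x y z.1 z.2 ∧
      dist z.1 z.2 ≤ ρ + 1 / (n + 1) := by
    intro n
    have hlt : ρ < ρ + 1 / (n + 1) := by
      have : (0:ℝ) < 1 / (n + 1) := by positivity
      linarith
    obtain ⟨a, haA, halt⟩ := exists_lt_of_csInf_lt hne hlt
    obtain ⟨_, x', y', hdesc, hle⟩ := haA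
    exact ⟨(x', y'), hdesc, hle.trans halt.le⟩
  choose u hu1 hu2 using hchoice
  obtain ⟨z, -, φ, hφ, hz⟩ := isCompact_univ.tendsto_subseq (fun n => Set.mem_univ (u n))
  have hz1 : Filter.Tendsto (fun n => (u (φ n)).1) Filter.atTop (nhds z.1) :=
    (continuous_fst.continuousAt.tendsto).comp hz
  have hz2 : Filter.Tendsto (fun n => (u (φ n)).2) Filter.atTop (nhds z.2) :=
    (continuous_snd.continuousAt.tendsto).comp hz
  have hdist : Filter.Tendsto (fun n => dist (u (φ n)).1 (u (φ n)).2) Filter.atTop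
      (nhds (dist z.1 z.2)) := hz1.dist hz2
  have haux : Filter.Tendsto (fun n : ℕ => ρ + 1 / ((φ n : ℝ) + 1)) Filter.atTop (nhds ρ) := by
    have h1 : Filter.Tendsto (fun n : ℕ => 1 / ((n : ℝ) + 1)) Filter.atTop (nhds 0) :=
      tendsto_one_div_add_atTop_nhds_zero_nat
    have h2 : Filter.Tendsto (fun n : ℕ => ρ + 1 / ((φ n : ℝ) + 1)) Filter.atTop
        (nhds (ρ + 0)) := (tendsto_const_nhds : Filter.Tendsto _ _ (nhds ρ)).add
      (h1.comp hφ.tendsto_atTop)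
    simpa using h2
  have hzρ : dist z.1 z.2 ≤ ρ :=
    le_of_tendsto_of_tendsto' hdist haux fun n => hu2 (φ n)
  -- find n far enough
  obtain ⟨N1, hN1⟩ := Metric.tendsto_atTop.mp hz1 ν hν0
  obtain ⟨N2, hN2⟩ := Metric.tendsto_atTop.mp hz2 ν hν0
  set n := max N1 N2
  have hdescz : Descends ν x y z.1 z.2 :=
    descends_extend (hu1 (φ n)) (hN1 n (le_max_left _ _)) (hN2 n (le_max_right _ _))
      (hzρ.trans hρd)
  have hρA : ρ ∈ A := ⟨⟨hρ0, hρd.trans hxy.le⟩, z.1, z.2, hdescz, hzρ⟩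
  refine ⟨ρ, hρ0, ?_⟩
  ext r'
  constructor
  · intro hmem
    exact ⟨csInf_le hbdd hmem, hmem.1.2⟩
  · rintro ⟨hρr', hr'r⟩
    exact ⟨⟨hρ0.trans hρr', hr'r⟩, z.1, z.2, hdescz, hzρ.trans hρr'⟩
end

section
/- Let (X,d) be a compact metric space, r > 0, x, y ∈ X with d(x,y) < r, 0 < ν < r − d(x,y), and let ρ = inf{ r' : (x,y) ν-descends to a pair at distance ≤ r' }. If ρ > 0 then ρ is a local minimum value of d; that is, there exists a pair (x', y') with d(x', y') = ρ to which (x,y) descends, and d attains a local minimum at (x', y'). -/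
/-!
The pairs to which `(x, y)` descends form a set `T ⊆ X × X` that contains every pair at
distance `≤ d(x, y)` lying within `ν` of `T`: the chains can be prolonged by one step. In
particular `T` contains the points of its closure at distance `≤ d(x, y)`, so a minimiser of
`d` on the compact set `closure T` lies in `T`, and its distance is `ρ`. The same one-step
prolongation shows that no pair within `ν` of the minimiser is closer.
-/

namespace Descends

variable {X : Type*} [MetricSpace X] {ν : ℝ} {x y x' y' a b : X}

theorem refl (ν : ℝ) (x y : X) : Descends ν x y x y :=
  ⟨0, fun _ => x, fun _ => y, rfl, rfl, rfl, rfl, Fin.elim0, Fin.elim0, fun _ => le_rfl⟩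

theorem snoc (h : Descends ν x y x' y') (ha : dist x' a < ν) (hb : dist y' b < ν)
    (hab : dist a b ≤ dist x y) : Descends ν x y a b := by
  obtain ⟨p, f, g, hf0, hg0, hfl, hgl, hfc, hgc, hfg⟩ := h
  refine ⟨p + 1, Fin.snoc f a, Fin.snoc g b, ?_, ?_, by simp, by simp, ?_, ?_, ?_⟩
  · rwa [← Fin.castSucc_zero, Fin.snoc_castSucc]
  · rwa [← Fin.castSucc_zero, Fin.snoc_castSucc]
  · refine Fin.lastCases ?_ fun i => ?_
    · simpa [Fin.succ_last, hfl] using ha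
    · rw [Fin.succ_castSucc, Fin.snoc_castSucc, Fin.snoc_castSucc]
      exact hfc i
  · refine Fin.lastCases ?_ fun i => ?_
    · simpa [Fin.succ_last, hgl] using hb
    · rw [Fin.succ_castSucc, Fin.snoc_castSucc, Fin.snoc_castSucc]
      exact hgc i
  · refine Fin.lastCases ?_ fun i => ?_
    · simpa using hab
    · simpa using hfg i

theorem of_mem_closure (hν : 0 < ν)
    (h : (a, b) ∈ closure {p : X × X | Descends ν x y p.1 p.2}) (hab : dist a b ≤ dist x y) :
    Descends ν x y a b := by
  obtain ⟨q, hq, hqp⟩ := Metric.mem_closure_iff.1 h ν hν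
  rw [dist_comm, Prod.dist_eq, max_lt_iff] at hqp
  exact hq.snoc hqp.1 hqp.2 hab

theorem exists_forall_dist_le [CompactSpace X] (hν : 0 < ν) (x y : X) :
    ∃ a b : X, Descends ν x y a b ∧ ∀ a' b', Descends ν x y a' b' → dist a b ≤ dist a' b' := by
  set T := {p : X × X | Descends ν x y p.1 p.2}
  obtain ⟨⟨a, b⟩, hab, hmin⟩ := (isClosed_closure (s := T)).isCompact.exists_isMinOn
    ⟨(x, y), subset_closure (refl ν x y)⟩ (continuous_fst.dist continuous_snd).continuousOn
  have hmin' : ∀ a' b', Descends ν x y a' b' → dist a b ≤ dist a' b' :=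
    fun a' b' h => hmin (subset_closure (show (a', b') ∈ T from h))
  exact ⟨a, b, of_mem_closure hν hab (hmin' x y (refl ν x y)), hmin'⟩

theorem dist_le_of_forall_dist_le (h : Descends ν x y x' y')
    (hmin : ∀ a' b', Descends ν x y a' b' → dist x' y' ≤ dist a' b')
    (ha : dist x' a < ν) (hb : dist y' b < ν) : dist x' y' ≤ dist a b := by
  have hxy : dist x' y' ≤ dist x y := hmin x y (refl ν x y)
  by_cases hab : dist a b ≤ dist x y
  · exact hmin a b (h.snoc ha hb hab)
  · linarith

end Descends

theorem stmt_7_general {X : Type*} [MetricSpace X] [CompactSpace X]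
    (x y : X) (ν : ℝ) (hν0 : 0 < ν) :
    ∃ x' y' : X, Descends ν x y x' y' ∧
      dist x' y' = sInf {r' : ℝ | ∃ x' y' : X, Descends ν x y x' y' ∧ dist x' y' ≤ r'} ∧
      ∃ ε > 0, ∀ a b : X, dist x' a < ε → dist y' b < ε → dist x' y' ≤ dist a b := by
  obtain ⟨x', y', h, hmin⟩ := Descends.exists_forall_dist_le hν0 x y
  have hleast : IsLeast {r' : ℝ | ∃ x' y' : X, Descends ν x y x' y' ∧ dist x' y' ≤ r'}
      (dist x' y') :=
    ⟨⟨x', y', h, le_rfl⟩, fun _ ⟨a, b, hab, hr⟩ => (hmin a b hab).trans hr⟩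
  exact ⟨x', y', h, hleast.csInf_eq.symm, ν, hν0,
    fun _ _ => h.dist_le_of_forall_dist_le hmin⟩

/-- if the infimum `ρ` of distances reachable from `(x,y)` by ν-descent is
positive, then it is attained at a pair `(x', y')` to which `(x,y)` descends, and `d`
attains a local minimum at `(x', y')` (so `ρ` is a local minimum value of `d`). -/
theorem stmt_7 {X : Type*} [MetricSpace X] [CompactSpace X] (r : ℝ) (hr : 0 < r)
    (x y : X) (hxy : dist x y < r) (ν : ℝ) (hν0 : 0 < ν) (hν : ν < r - dist x y)
    (hρ : 0 < sInf {r' : ℝ | ∃ x' y' : X, Descends ν x y x' y' ∧ dist x' y' ≤ r'}) :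
    ∃ x' y' : X, Descends ν x y x' y' ∧
      dist x' y' = sInf {r' : ℝ | ∃ x' y' : X, Descends ν x y x' y' ∧ dist x' y' ≤ r'} ∧
      ∃ ε > 0, ∀ a b : X, dist x' a < ε → dist y' b < ε → dist x' y' ≤ dist a b :=
  stmt_7_general x y ν hν0
end
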